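/- The small box product ⊡ᵢ (Xᵢ, xᵢ) is strongly locally contractible at the base point if and only if each Xᵢ is strongly locally contractible at xᵢ. -/

import Mathlib

/-- The box topology on a countable product, generated by boxes `∏ᵢ Uᵢ`. -/
def boxTopology (X : ℕ → Type*) [∀ i, TopologicalSpace (X i)] :
    TopologicalSpace (∀ i, X i) :=
  TopologicalSpace.generateFrom
    {S | ∃ U : ∀ i, Set (X i), (∀ i, IsOpen (U i)) ∧ S = Set.pi Set.univ U}

/-- The small box product of a sequence of pointed spaces: sequences eventually
equal to the base point. -/
abbrev SmallBoxP (X : ℕ → Type*) (pt : ∀ i, X i) :=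
  {x : ∀ i, X i // ∃ N, ∀ i ≥ N, x i = pt i}

/-- The topology of the small box product: subspace of the box topology. -/
def smallBoxPTop (X : ℕ → Type*) [∀ i, TopologicalSpace (X i)] (pt : ∀ i, X i) :
    TopologicalSpace (SmallBoxP X pt) :=
  TopologicalSpace.induced Subtype.val (boxTopology X)

/-- A space `X` is strongly locally contractible at `x` if every neighborhood
`U` of `x` contains a neighborhood `V` of `x` which contracts to `x` inside `U`
keeping `x` fixed. -/
def StronglyLocallyContractibleAt {X : Type*} [TopologicalSpace X] (x : X) : Prop :=
  ∀ U ∈ nhds x, ∃ V ∈ nhds x, V ⊆ U ∧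
    ∃ H : V × unitInterval → X, Continuous H ∧
      (∀ y t, H (y, t) ∈ U) ∧ (∀ y : V, H (y, 0) = (y : X)) ∧
      (∀ y : V, H (y, 1) = x) ∧ ∀ (hx : x ∈ V) t, H (⟨x, hx⟩, t) = x


/-!
Each factor `Xᵢ` is a retract of the small box product (insert at coordinate `i`, project to
coordinate `i`), and strong local contractibility at a point passes to retracts. Conversely,
inside a box `∏ Uᵢ` around the base point, contractions `Hᵢ` of neighborhoods `Vᵢ ⊆ Uᵢ` fixing
`xᵢ` assemble coordinatewise into a contraction of `∏ Vᵢ`. It is continuous in the box topology: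
at a point `(y, t₀)` with `yᵢ = xᵢ` for `i ≥ N`, the `Hᵢ` with `i ≥ N` are stationary at `yᵢ`, so
the tube lemma over the compact interval controls them without restricting `t`, and only the `N`
remaining coordinates constrain `t`.
-/

open Set Filter Topology

theorem StronglyLocallyContractibleAt.of_leftInverse {X Y : Type*} [TopologicalSpace X]
    [TopologicalSpace Y] {x : X} {s : X → Y} {r : Y → X} (hs : Continuous s) (hr : Continuous r)
    (hrs : Function.LeftInverse r s) (h : StronglyLocallyContractibleAt (s x)) :
    StronglyLocallyContractibleAt x := by
  intro U hU
  have hrU : r ⁻¹' U ∈ 𝓝 (s x) := hr.continuousAt.preimage_mem_nhds (by rwa [hrs x])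
  obtain ⟨V, hV, hVU, H, hHc, hHU, hH0, hH1, hHfix⟩ := h _ hrU
  refine ⟨s ⁻¹' V, hs.continuousAt.preimage_mem_nhds hV, fun y hy => hrs y ▸ hVU hy,
    fun z => r (H (⟨s z.1, z.1.2⟩, z.2)), ?_, fun y t => hHU _ t, fun y => ?_, fun y => ?_,
    fun hx t => ?_⟩
  · exact hr.comp (hHc.comp (((hs.comp continuous_subtype_val).subtype_mk _).prodMap
      continuous_id))
  · dsimp only; rw [hH0]; exact hrs y
  · dsimp only; rw [hH1]; exact hrs x
  · dsimp only; rw [hHfix]; exact hrs x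

theorem homotopy_apply_eq_of_coe_eq {X Y T : Type*} {V : Set X}
    {H : V × T → Y} {x : X} {y : Y} (hH : ∀ (hx : x ∈ V) t, H (⟨x, hx⟩, t) = y) {a : V}
    (ha : (a : X) = x) (t : T) : H (a, t) = y := by
  obtain ⟨a, haV⟩ := a
  subst ha
  exact hH haV t

theorem isTopologicalBasis_boxTopology (X : ℕ → Type*) [∀ i, TopologicalSpace (X i)] :
    @TopologicalSpace.IsTopologicalBasis _ (boxTopology X)
      {S | ∃ U : ∀ i, Set (X i), (∀ i, IsOpen (U i)) ∧ S = univ.pi U} := by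
  let _ := boxTopology X
  refine ⟨?_, ?_, rfl⟩
  · rintro _ ⟨U₁, hU₁, rfl⟩ _ ⟨U₂, hU₂, rfl⟩ x hx
    exact ⟨_, ⟨fun i => U₁ i ∩ U₂ i, fun i => (hU₁ i).inter (hU₂ i), rfl⟩,
      by rwa [pi_inter_distrib], by rw [pi_inter_distrib]⟩
  · exact sUnion_eq_univ_iff.2 fun x =>
      ⟨univ, ⟨fun _ => univ, fun _ => isOpen_univ, pi_univ univ |>.symm⟩, mem_univ x⟩

theorem boxTopology_mem_nhds_iff {X : ℕ → Type*} [∀ i, TopologicalSpace (X i)] {x : ∀ i, X i}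
    {s : Set (∀ i, X i)} :
    s ∈ @nhds _ (boxTopology X) x ↔ ∃ U : ∀ i, Set (X i), (∀ i, U i ∈ 𝓝 (x i)) ∧ univ.pi U ⊆ s := by
  let _ := boxTopology X
  rw [(isTopologicalBasis_boxTopology X).mem_nhds_iff]
  constructor
  · rintro ⟨_, ⟨U, hU, rfl⟩, hxU, hUs⟩
    exact ⟨U, fun i => (hU i).mem_nhds (hxU i trivial), hUs⟩
  · rintro ⟨U, hU, hUs⟩
    exact ⟨_, ⟨fun i => interior (U i), fun _ => isOpen_interior, rfl⟩,
      fun i _ => mem_interior_iff_mem_nhds.2 (hU i),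
      (pi_mono fun i _ => interior_subset).trans hUs⟩

namespace SmallBoxP

variable {X Y : ℕ → Type*} {p : ∀ i, X i} {q : ∀ i, Y i}

variable (p) in
def single (i : ℕ) (a : X i) : SmallBoxP X p :=
  ⟨Function.update p i a, i + 1, fun _ hj => Function.update_of_ne (by omega) _ _⟩

@[simp]
theorem single_apply_self (i : ℕ) (a : X i) : (single p i a).1 i = a :=
  Function.update_self _ _ _

theorem single_base (i : ℕ) : single p i (p i) = ⟨p, 0, fun _ _ => rfl⟩ :=
  Subtype.ext (Function.update_eq_self _ _)

variable [∀ i, TopologicalSpace (X i)] [∀ i, TopologicalSpace (Y i)]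

-- Takes precedence over the subspace topology of the product topology, which `SmallBoxP X p`
-- also carries as a subtype of `∀ i, X i`.
attribute [local instance] smallBoxPTop

theorem mem_nhds_iff {x : SmallBoxP X p} {s : Set (SmallBoxP X p)} :
    s ∈ 𝓝 x ↔ ∃ U : ∀ i, Set (X i), (∀ i, U i ∈ 𝓝 (x.1 i)) ∧ {y | ∀ i, y.1 i ∈ U i} ⊆ s := by
  unfold smallBoxPTop
  rw [nhds_induced (T := boxTopology X), mem_comap]
  constructor
  · rintro ⟨t, ht, hts⟩
    obtain ⟨U, hU, hUt⟩ := boxTopology_mem_nhds_iff.1 ht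
    exact ⟨U, hU, fun y hy => hts (hUt fun i _ => hy i)⟩
  · rintro ⟨U, hU, hUs⟩
    exact ⟨_, boxTopology_mem_nhds_iff.2 ⟨U, hU, subset_rfl⟩, fun y hy => hUs fun i => hy i trivial⟩

theorem continuous_apply (i : ℕ) : Continuous fun x : SmallBoxP X p => x.1 i := by
  classical
  refine continuous_iff_continuousAt.2 fun x W hW => mem_nhds_iff.2
    ⟨Function.update (fun _ => univ) i W, fun j => ?_, fun y hy => by simpa using hy i⟩
  rcases eq_or_ne j i with rfl | hji
  · simpa using hW
  · simp [hji]

theorem continuous_single (i : ℕ) : Continuous (single p i) := by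
  refine continuous_iff_continuousAt.2 fun a s hs => ?_
  obtain ⟨U, hU, hUs⟩ := mem_nhds_iff.1 hs
  refine mem_map.2 (mem_of_superset (single_apply_self i a ▸ hU i) fun b hb => hUs fun j => ?_)
  rcases eq_or_ne j i with rfl | hji
  · simpa using hb
  · have hpU := mem_of_mem_nhds (hU j)
    simp only [single, Function.update_of_ne hji] at hpU ⊢
    exact hpU

section Homotopy

variable {T : Type*} [TopologicalSpace T] {V : ∀ i, Set (X i)} {H : ∀ i, V i × T → Y i}

variable (V H) in
def piHomotopy (hH : ∀ i (hp : p i ∈ V i) t, H i (⟨p i, hp⟩, t) = q i) :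
    {x : SmallBoxP X p | ∀ i, x.1 i ∈ V i} × T → SmallBoxP Y q :=
  fun z => ⟨fun i => H i (⟨z.1.1.1 i, z.1.2 i⟩, z.2), by
    obtain ⟨N, hN⟩ := z.1.1.2
    exact ⟨N, fun i hi => homotopy_apply_eq_of_coe_eq (hH i) (hN i hi) _⟩⟩

theorem continuous_piHomotopy [CompactSpace T]
    (hH : ∀ i (hp : p i ∈ V i) t, H i (⟨p i, hp⟩, t) = q i) (hHc : ∀ i, Continuous (H i)) :
    Continuous (piHomotopy V H hH) := by
  refine continuous_iff_continuousAt.2 fun ⟨y, t₀⟩ s hs => ?_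
  obtain ⟨U, hU, hUs⟩ := mem_nhds_iff.1 hs
  obtain ⟨N, hN⟩ := y.1.2
  have hrect : ∀ i, ∃ A ∈ 𝓝 (y.1.1 i), ∃ J ∈ 𝓝 t₀, (N ≤ i → J = univ) ∧
      ∀ a : V i, (a : X i) ∈ A → ∀ t ∈ J, H i (a, t) ∈ U i := by
    intro i
    by_cases hi : N ≤ i
    · -- Beyond `N` the homotopy stays at `q i`, so the tube lemma applies.
      have hstat : ∀ t, H i (⟨y.1.1 i, y.2 i⟩, t) = q i :=
        homotopy_apply_eq_of_coe_eq (hH i) (hN i hi)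
      have hU' : U i ∈ 𝓝 (q i) := hstat t₀ ▸ hU i
      obtain ⟨A, hA, hAU⟩ := (mem_nhds_subtype _ _ _).1
        (isCompact_univ.eventually_forall_of_forall_eventually
          (P := fun a t => H i (a, t) ∈ U i) fun t _ =>
          (hHc i).continuousAt.preimage_mem_nhds (by rwa [hstat t]))
      exact ⟨A, hA, univ, univ_mem, fun _ => rfl, fun a ha t _ => hAU ha t trivial⟩
    · obtain ⟨B, hB, J, hJ, hBJ⟩ :=
        mem_nhds_prod_iff.1 ((hHc i).continuousAt.preimage_mem_nhds (hU i))
      obtain ⟨A, hA, hAB⟩ := (mem_nhds_subtype _ _ _).1 hB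
      exact ⟨A, hA, J, hJ, (absurd · hi), fun a ha t ht => hBJ ⟨hAB ha, ht⟩⟩
  choose A hA J hJ hJuniv hAJ using hrect
  have hbox : {x : SmallBoxP X p | ∀ i, x.1 i ∈ A i} ∈ 𝓝 y.1 := mem_nhds_iff.2 ⟨A, hA, subset_rfl⟩
  have htime : ⋂ i ∈ Finset.range N, J i ∈ 𝓝 t₀ := (biInter_finset_mem _).2 fun i _ => hJ i
  refine mem_map.2 ?_
  filter_upwards [prod_mem_nhds (continuous_subtype_val.continuousAt.preimage_mem_nhds hbox) htime]
    with ⟨z, t⟩ ⟨hz, ht⟩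
  refine hUs fun i => hAJ i _ (hz i) t ?_
  by_cases hi : N ≤ i
  · simp [hJuniv i hi]
  · exact mem_iInter₂.1 ht i (Finset.mem_range.2 (by omega))

end Homotopy

theorem stronglyLocallyContractibleAt_base (h : ∀ i, StronglyLocallyContractibleAt (p i)) :
    StronglyLocallyContractibleAt (⟨p, 0, fun _ _ => rfl⟩ : SmallBoxP X p) := by
  intro U hU
  obtain ⟨W, hW, hWU⟩ := mem_nhds_iff.1 hU
  choose V hV hVW H hHc hHW hH0 hH1 hHfix using fun i => h i (W i) (hW i)
  refine ⟨{x | ∀ i, x.1 i ∈ V i}, mem_nhds_iff.2 ⟨V, hV, subset_rfl⟩,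
    fun x hx => hWU fun i => hVW i (hx i), piHomotopy V H hHfix,
    continuous_piHomotopy hHfix hHc, fun y t => hWU fun i => hHW i _ t,
    fun y => ?_, fun y => ?_, fun hx t => ?_⟩ <;> refine Subtype.ext (funext fun i => ?_)
  · exact hH0 i _
  · exact hH1 i _
  · exact hHfix i _ t

theorem stronglyLocallyContractibleAt_of_base
    (h : StronglyLocallyContractibleAt (⟨p, 0, fun _ _ => rfl⟩ : SmallBoxP X p)) (i : ℕ) :
    StronglyLocallyContractibleAt (p i) :=
  .of_leftInverse (continuous_single i) (continuous_apply i) (single_apply_self i)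
    (single_base i ▸ h)

end SmallBoxP

/-- the small box product `⊡ᵢ (Xᵢ, xᵢ)` is strongly locally
contractible at its base point iff each `Xᵢ` is strongly locally contractible
at `xᵢ`. -/
theorem stmt12 (X : ℕ → Type*) [∀ i, TopologicalSpace (X i)] (pt : ∀ i, X i) :
    @StronglyLocallyContractibleAt (SmallBoxP X pt) (smallBoxPTop X pt)
        ⟨pt, 0, fun _ _ => rfl⟩ ↔
      ∀ i, StronglyLocallyContractibleAt (pt i) :=
  ⟨SmallBoxP.stronglyLocallyContractibleAt_of_base, SmallBoxP.stronglyLocallyContractibleAt_base⟩
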